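/- arXiv:1811.05853 — 9 statements merged into one kernel-verified Lean document; each statement's English description precedes it below -/
import Mathlib

section
/- Let l and g be natural numbers with 90g ≤ 24l − 103, and let p₁ < p₂ < ⋯ < p_l be pairwise coprime integers with p₁ ≥ 2. Then, as rational numbers, (3g + 1)/2 < (1/2)·(l − 2 − ∑_{i=1}^{l} 1/p_i). -/
/-! Strict monotonicity gives `p i ≥ i + 2`, so `∑ 1 / p i ≤ 1/2 + ⋯ + 1/(l+1) < (3l + 7)/15`
once `l ≥ 5`, while the bound on `g` gives `(3l + 7)/15 ≤ l - 3 - 3g`. -/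

open Finset

theorem StrictMono.apply_zero_add_le {l : ℕ} {p : Fin l → ℤ} (hp : StrictMono p) (hl : 0 < l)
    (i : Fin l) : p ⟨0, hl⟩ + i ≤ p i := by
  obtain ⟨k, hk⟩ := i
  induction k with
  | zero => simp
  | succ k ih =>
    have hstep : p ⟨k, by omega⟩ < p ⟨k + 1, hk⟩ := hp (Fin.mk_lt_mk.mpr k.lt_succ_self)
    push_cast at ih ⊢
    linarith [ih (by omega)]

theorem sum_range_one_div_add_two_lt {n : ℕ} (hn : 5 ≤ n) :
    ∑ i ∈ range n, (1 : ℚ) / (i + 2) < (3 * n + 7) / 15 := by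
  induction n, hn using Nat.le_induction with
  | base => norm_num [sum_range_succ]
  | succ n hn ih =>
    have hlast : (1 : ℚ) / (n + 2) ≤ 1 / 7 :=
      one_div_le_one_div_of_le (by norm_num) (by exact_mod_cast (by omega : 7 ≤ n + 2))
    rw [sum_range_succ]
    push_cast
    linarith

theorem sum_one_div_lt_of_add_two_le {l : ℕ} (hl : 5 ≤ l) {p : Fin l → ℤ}
    (hp : ∀ i : Fin l, (i : ℤ) + 2 ≤ p i) :
    ∑ i, (1 : ℚ) / p i < (3 * l + 7) / 15 :=
  calc ∑ i, (1 : ℚ) / p i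
      ≤ ∑ i : Fin l, (1 : ℚ) / ((i : ℕ) + 2) := by
        refine sum_le_sum fun i _ => one_div_le_one_div_of_le (by positivity) ?_
        exact_mod_cast hp i
    _ = ∑ i ∈ range l, (1 : ℚ) / (i + 2) :=
        Fin.sum_univ_eq_sum_range (fun i => 1 / ((i : ℚ) + 2)) l
    _ < (3 * l + 7) / 15 := sum_range_one_div_add_two_lt hl

theorem stmt2_general (l g : ℕ) (hl : 0 < l) (hlg : 90 * (g : ℤ) ≤ 24 * (l : ℤ) - 103)
    (p : Fin l → ℤ)
    (hmono : StrictMono p)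
    (h2 : 2 ≤ p ⟨0, hl⟩) :
    (3 * (g : ℚ) + 1) / 2 < (1/2) * ((l : ℚ) - 2 - ∑ i : Fin l, (1 : ℚ) / (p i : ℚ)) := by
  have hl5 : 5 ≤ l := by omega
  -- `24 l - 103` is odd, so the bound on `90 g` improves by one.
  have hlg' : 90 * (g : ℚ) ≤ 24 * l - 104 := by
    exact_mod_cast (by omega : 90 * (g : ℤ) ≤ 24 * l - 104)
  have hp : ∀ i : Fin l, (i : ℤ) + 2 ≤ p i := fun i => by
    linarith [hmono.apply_zero_add_le hl i]
  linarith [sum_one_div_lt_of_add_two_le hl5 hp]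

/-- Let `l` and `g` be natural numbers with `90g ≤ 24l − 103`, and let
`p₁ < p₂ < ⋯ < p_l` be pairwise coprime integers with `p₁ ≥ 2`. Then, as rational
numbers, `(3g + 1)/2 < (1/2)·(l − 2 − ∑_{i=1}^{l} 1/p_i)`. -/
theorem stmt2 (l g : ℕ) (hl : 0 < l) (hlg : 90 * (g : ℤ) ≤ 24 * (l : ℤ) - 103)
    (p : Fin l → ℤ)
    (hmono : StrictMono p)
    (hcop : ∀ i j : Fin l, i ≠ j → Int.gcd (p i) (p j) = 1)
    (h2 : 2 ≤ p ⟨0, hl⟩) :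
    (3 * (g : ℚ) + 1) / 2 < (1/2) * ((l : ℚ) - 2 - ∑ i : Fin l, (1 : ℚ) / (p i : ℚ)) :=
  stmt2_general l g hl hlg p hmono h2
end

section
/- Let p₁ < p₂ < p₃ < p₄ < p₅ be pairwise coprime integers with p₁ ≥ 2, and suppose one of the following holds: (1) p₁ ≥ 4; (2) p₁ = 3 and p₅ ≥ 17; (3) p₁ = 2, p₂ = 3 and p₃ ≥ 17; (4) p₁ = 2, p₂ = 3, p₃ = 7, p₄ = 43 and p₅ ≥ 1811; (5) p₁ = 2, p₂ = 3, p₃ = 11, p₄ ≥ 15 and p₅ ≥ 101. Then, as rational numbers, ∑_{i=1}^{5} 1/p_i < 1. -/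
lemma aux_one_div_le (a b : ℤ) (hb : 0 < b) (h : b ≤ a) : (1:ℚ)/(a:ℚ) ≤ 1/(b:ℚ) := by
  apply one_div_le_one_div_of_le
  · exact_mod_cast hb
  · exact_mod_cast h

lemma aux_not_dvd (a x : ℤ) (h : Int.gcd a x = 1) (ha : 2 ≤ a) : ¬ a ∣ x := by
  intro hx
  have hc : IsCoprime a x := Int.isCoprime_iff_gcd_eq_one.mpr h
  have := hc.isUnit_of_dvd' dvd_rfl hx
  rw [Int.isUnit_iff] at this
  omega

/-- Let `p₁ < p₂ < p₃ < p₄ < p₅` be pairwise coprime integers with `p₁ ≥ 2`, and suppose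
one of the listed five cases holds. Then `∑_{i=1}^{5} 1/p_i < 1` as rational numbers. -/
theorem stmt4 (p : Fin 5 → ℤ)
    (hmono : StrictMono p)
    (hcop : ∀ i j : Fin 5, i ≠ j → Int.gcd (p i) (p j) = 1)
    (h2 : 2 ≤ p 0)
    (hcase :
      (4 ≤ p 0) ∨
      (p 0 = 3 ∧ 17 ≤ p 4) ∨
      (p 0 = 2 ∧ p 1 = 3 ∧ 17 ≤ p 2) ∨
      (p 0 = 2 ∧ p 1 = 3 ∧ p 2 = 7 ∧ p 3 = 43 ∧ 1811 ≤ p 4) ∨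
      (p 0 = 2 ∧ p 1 = 3 ∧ p 2 = 11 ∧ 15 ≤ p 3 ∧ 101 ≤ p 4)) :
    ∑ i : Fin 5, (1 : ℚ) / (p i : ℚ) < 1 := by
  have h01 : p 0 < p 1 := hmono (by decide : (0:Fin 5) < 1)
  have h12 : p 1 < p 2 := hmono (by decide : (1:Fin 5) < 2)
  have h23 : p 2 < p 3 := hmono (by decide : (2:Fin 5) < 3)
  have h34 : p 3 < p 4 := hmono (by decide : (3:Fin 5) < 4)
  rw [Fin.sum_univ_five]
  have key : ∀ a b c d e : ℤ, 0 < a → a ≤ p 0 → 0 < b → b ≤ p 1 →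
      0 < c → c ≤ p 2 → 0 < d → d ≤ p 3 → 0 < e → e ≤ p 4 →
      (1:ℚ)/(a:ℚ) + 1/(b:ℚ) + 1/(c:ℚ) + 1/(d:ℚ) + 1/(e:ℚ) < 1 →
      (1:ℚ)/(p 0:ℚ) + 1/(p 1:ℚ) + 1/(p 2:ℚ) + 1/(p 3:ℚ) + 1/(p 4:ℚ) < 1 := by
    intro a b c d e ha ha' hb hb' hc hc' hd hd' he he' hlt
    have := aux_one_div_le (p 0) a ha ha'
    have := aux_one_div_le (p 1) b hb hb'
    have := aux_one_div_le (p 2) c hc hc'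
    have := aux_one_div_le (p 3) d hd hd'
    have := aux_one_div_le (p 4) e he he'
    linarith
  rcases hcase with h | ⟨e0, e4⟩ | ⟨e0, e1, e2⟩ | ⟨e0, e1, e2, e3, e4⟩ | ⟨e0, e1, e2, e3, e4⟩
  · exact key 4 5 6 7 8 (by norm_num) h (by norm_num) (by omega) (by norm_num) (by omega)
      (by norm_num) (by omega) (by norm_num) (by omega) (by norm_num)
  · -- p0 = 3, p4 ≥ 17; p3 not divisible by 3 hence ≥ 7
    have hd3 := aux_not_dvd (p 0) (p 3) (hcop 0 3 (by decide)) (by omega)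
    rw [e0] at hd3
    exact key 3 4 5 7 17 (by norm_num) (by omega) (by norm_num) (by omega) (by norm_num)
      (by omega) (by norm_num) (by omega) (by norm_num) (by omega) (by norm_num)
  · -- p0 = 2, p1 = 3, p2 ≥ 17; p3 ≥ 19, p4 ≥ 23
    have d03 := aux_not_dvd (p 0) (p 3) (hcop 0 3 (by decide)) (by omega)
    have d13 := aux_not_dvd (p 1) (p 3) (hcop 1 3 (by decide)) (by omega)
    rw [e0] at d03
    rw [e1] at d13
    have hp3 : 19 ≤ p 3 := by omega
    clear d03 d13
    have d04 := aux_not_dvd (p 0) (p 4) (hcop 0 4 (by decide)) (by omega)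
    have d14 := aux_not_dvd (p 1) (p 4) (hcop 1 4 (by decide)) (by omega)
    rw [e0] at d04
    rw [e1] at d14
    have hp4 : 23 ≤ p 4 := by omega
    exact key 2 3 17 19 23 (by norm_num) (by omega) (by norm_num) (by omega) (by norm_num)
      (by omega) (by norm_num) (by omega) (by norm_num) (by omega) (by norm_num)
  · exact key 2 3 7 43 1811 (by norm_num) (by omega) (by norm_num) (by omega) (by norm_num)
      (by omega) (by norm_num) (by omega) (by norm_num) (by omega) (by norm_num)
  · -- p0 = 2, p1 = 3, p2 = 11, p3 ≥ 15 → 17, p4 ≥ 101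
    have d03 := aux_not_dvd (p 0) (p 3) (hcop 0 3 (by decide)) (by omega)
    have d13 := aux_not_dvd (p 1) (p 3) (hcop 1 3 (by decide)) (by omega)
    rw [e0] at d03
    rw [e1] at d13
    exact key 2 3 11 17 101 (by norm_num) (by omega) (by norm_num) (by omega) (by norm_num)
      (by omega) (by norm_num) (by omega) (by norm_num) (by omega) (by norm_num)
end

section
/- Let l ≥ 1 and let p₁, …, p_l be pairwise coprime integers with each p_i ≥ 2. Then there exists a unique tuple of integers (e₀, p₁', …, p_l') satisfying e₀·p₁⋯p_l + ∑_{i=1}^{l} p_i'·∏_{j≠i} p_j = −1 and 1 ≤ p_i' ≤ p_i − 1 for every i. -/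
/-!
Dividing by `P = p₁⋯p_l`, the equation reads `e₀ + ∑ pᵢ'/pᵢ = -1/P`. Reducing it modulo `pᵢ`
kills every term but `pᵢ' ∏_{j≠i} p_j`, and `∏_{j≠i} p_j` is a unit modulo `pᵢ`; so `pᵢ'` is the
unique residue in `[1, pᵢ - 1]` with `pᵢ' ∏_{j≠i} p_j ≡ -1 (mod pᵢ)`. With these `pᵢ'` the sum
`∑ pᵢ' ∏_{j≠i} p_j + 1` is divisible by every `pᵢ`, hence by `P`, which determines `e₀`.
-/

open Finset Function

namespace Int

theorem exists_mem_Icc_dvd_mul_add_one {a m : ℤ} (hm : 2 ≤ m) (h : IsCoprime a m) :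
    ∃ q, (1 ≤ q ∧ q ≤ m - 1) ∧ m ∣ q * a + 1 := by
  obtain ⟨u, v, huv⟩ := h
  have hdvd : m ∣ (-u) % m * a + 1 :=
    ⟨v - (-u / m) * a, by linear_combination (Int.emod_def (-u) m) * a - huv⟩
  have hne : (-u) % m ≠ 0 := by
    intro h0
    rw [h0, zero_mul, zero_add] at hdvd
    linarith [Int.le_of_dvd one_pos hdvd]
  have hnn : 0 ≤ (-u) % m := Int.emod_nonneg _ (by omega)
  have hlt : (-u) % m < m := Int.emod_lt_of_pos _ (by omega)
  exact ⟨(-u) % m, ⟨by omega, by omega⟩, hdvd⟩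

theorem eq_of_dvd_sub_of_mem_Icc {m q q' : ℤ} (h : m ∣ q - q')
    (hq : 1 ≤ q ∧ q ≤ m - 1) (hq' : 1 ≤ q' ∧ q' ≤ m - 1) : q = q' := by
  have := Int.eq_zero_of_abs_lt_dvd h (by rw [abs_lt]; omega)
  omega

end Int

variable {ι : Type*} [Fintype ι] [DecidableEq ι] {p : ι → ℤ}

/-- The numerator of `e + ∑ i, q i / p i` over the common denominator `∏ i, p i`. -/
def commonDenomNumerator (p : ι → ℤ) (e : ℤ) (q : ι → ℤ) : ℤ :=
  e * ∏ j, p j + ∑ i, q i * ∏ j ∈ univ.erase i, p j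

theorem dvd_prod_erase_of_ne {i k : ι} (hik : i ≠ k) : p i ∣ ∏ j ∈ univ.erase k, p j :=
  dvd_prod_of_mem p (mem_erase.mpr ⟨hik, mem_univ i⟩)

theorem isCoprime_prod_erase (hcop : Pairwise (IsCoprime on p)) (i : ι) :
    IsCoprime (p i) (∏ j ∈ univ.erase i, p j) :=
  IsCoprime.prod_right fun _ hj => hcop (mem_erase.mp hj).1.symm

theorem dvd_commonDenomNumerator_sub (e : ℤ) (q : ι → ℤ) (i : ι) :
    p i ∣ commonDenomNumerator p e q - q i * ∏ j ∈ univ.erase i, p j := by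
  rw [commonDenomNumerator, ← add_sum_erase _ _ (mem_univ i)]
  have hP : p i ∣ ∏ j, p j := dvd_prod_of_mem p (mem_univ i)
  have hrest : p i ∣ ∑ j ∈ univ.erase i, q j * ∏ k ∈ univ.erase j, p k :=
    dvd_sum fun j hj => (dvd_prod_erase_of_ne (mem_erase.mp hj).1.symm).mul_left _
  rw [add_left_comm, add_sub_cancel_left]
  exact dvd_add (hP.mul_left e) hrest

theorem eq_of_commonDenomNumerator_eq (hcop : Pairwise (IsCoprime on p)) {e e' : ℤ}
    {q q' : ι → ℤ} (hq : ∀ i, 1 ≤ q i ∧ q i ≤ p i - 1) (hq' : ∀ i, 1 ≤ q' i ∧ q' i ≤ p i - 1)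
    (h : commonDenomNumerator p e q = commonDenomNumerator p e' q') : e = e' ∧ q = q' := by
  have hqq : q = q' := by
    funext i
    have hmul : p i ∣ (q i - q' i) * ∏ j ∈ univ.erase i, p j := by
      have hdiff := dvd_sub (dvd_commonDenomNumerator_sub e' q' i)
        (dvd_commonDenomNumerator_sub (p := p) e q i)
      rwa [h, sub_sub_sub_cancel_left, ← sub_mul] at hdiff
    exact Int.eq_of_dvd_sub_of_mem_Icc ((isCoprime_prod_erase hcop i).dvd_of_dvd_mul_right hmul)
      (hq i) (hq' i)
  subst hqq
  have hP : ∏ j, p j ≠ 0 := prod_ne_zero_iff.mpr fun i _ => by have := hq i; omega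
  refine ⟨mul_right_cancel₀ hP ?_, rfl⟩
  simpa only [commonDenomNumerator, add_left_inj] using h

theorem exists_commonDenomNumerator_eq_neg_one (hp : ∀ i, 2 ≤ p i)
    (hcop : Pairwise (IsCoprime on p)) :
    ∃ e q, commonDenomNumerator p e q = -1 ∧ ∀ i, 1 ≤ q i ∧ q i ≤ p i - 1 := by
  choose q hq hdvd using fun i =>
    Int.exists_mem_Icc_dvd_mul_add_one (hp i) (isCoprime_prod_erase hcop i).symm
  obtain ⟨t, ht⟩ : ∏ j, p j ∣ commonDenomNumerator p 0 q + 1 := by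
    refine prod_dvd_of_coprime (fun i _ j _ hij => hcop hij) fun i _ => ?_
    rw [← sub_add_cancel (commonDenomNumerator p 0 q) (q i * ∏ j ∈ univ.erase i, p j), add_assoc]
    exact dvd_add (dvd_commonDenomNumerator_sub 0 q i) (hdvd i)
  refine ⟨-t, q, ?_, hq⟩
  simp only [commonDenomNumerator, zero_mul, zero_add] at ht ⊢
  linear_combination ht

theorem stmt5_general (l : ℕ) (p : Fin l → ℤ)
    (hp2 : ∀ i, 2 ≤ p i)
    (hcop : ∀ i j : Fin l, i ≠ j → Int.gcd (p i) (p j) = 1) :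
    ∃! ep : ℤ × (Fin l → ℤ),
      ep.1 * ∏ j, p j + ∑ i, ep.2 i * ∏ j ∈ Finset.univ.erase i, p j = -1 ∧
      ∀ i, 1 ≤ ep.2 i ∧ ep.2 i ≤ p i - 1 := by
  have hcop' : Pairwise (IsCoprime on p) := fun i j hij =>
    Int.isCoprime_iff_gcd_eq_one.mpr (hcop i j hij)
  obtain ⟨e, q, hsum, hq⟩ := exists_commonDenomNumerator_eq_neg_one hp2 hcop'
  refine ⟨(e, q), ⟨hsum, hq⟩, ?_⟩
  rintro ⟨e', q'⟩ ⟨hsum', hq'⟩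
  obtain ⟨rfl, rfl⟩ :=
    eq_of_commonDenomNumerator_eq hcop' hq' hq (hsum'.trans hsum.symm)
  rfl

/-- Let `l ≥ 1` and let `p₁, …, p_l` be pairwise coprime integers with each `p_i ≥ 2`.
Then there exists a unique tuple of integers `(e₀, p₁', …, p_l')` satisfying
`e₀·p₁⋯p_l + ∑_{i=1}^{l} p_i'·∏_{j≠i} p_j = −1` and `1 ≤ p_i' ≤ p_i − 1` for every `i`. -/
theorem stmt5 (l : ℕ) (hl : 1 ≤ l) (p : Fin l → ℤ)
    (hp2 : ∀ i, 2 ≤ p i)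
    (hcop : ∀ i j : Fin l, i ≠ j → Int.gcd (p i) (p j) = 1) :
    ∃! ep : ℤ × (Fin l → ℤ),
      ep.1 * ∏ j, p j + ∑ i, ep.2 i * ∏ j ∈ Finset.univ.erase i, p j = -1 ∧
      ∀ i, 1 ≤ ep.2 i ∧ ep.2 i ≤ p i - 1 :=
  stmt5_general l p hp2 hcop
end

section
/- Let l ≥ 1 and let p₁, …, p_l be pairwise coprime integers with each p_i ≥ 2, and let integers (e₀, p₁', …, p_l') satisfy e₀·p₁⋯p_l + ∑_{i=1}^{l} p_i'·∏_{j≠i} p_j = −1 with 1 ≤ p_i' ≤ p_i − 1 for every i. Then e₀ < 0, and for every integer k, Δ(k·p₁⋯p_l) = k + 1, where Δ(n) = 1 + |e₀|·n − ∑_{i=1}^{l} ⌈n·p_i'/p_i⌉ and ⌈·⌉ denotes the ceiling of a rational number. -/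
open Finset

theorem Int.ceil_prod_mul_div_eq {ι : Type*} [Fintype ι] [DecidableEq ι] (p : ι → ℤ) {i : ι}
    (hi : p i ≠ 0) (k c : ℤ) :
    ⌈(((k * ∏ j, p j) * c : ℤ) : ℚ) / ((p i : ℤ) : ℚ)⌉ = k * c * ∏ j ∈ univ.erase i, p j := by
  have hfactor : (k * ∏ j, p j) * c = p i * (k * c * ∏ j ∈ univ.erase i, p j) := by
    rw [← mul_prod_erase univ p (mem_univ i)]; ring
  rw [hfactor, Int.cast_mul, mul_div_cancel_left₀ _ (by exact_mod_cast hi), Int.ceil_intCast]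

theorem stmt6_general (l : ℕ) (p : Fin l → ℤ)
    (hp2 : ∀ i, 2 ≤ p i)
    (e₀ : ℤ) (p' : Fin l → ℤ)
    (heq : e₀ * ∏ j, p j + ∑ i, p' i * ∏ j ∈ Finset.univ.erase i, p j = -1)
    (hp' : ∀ i, 1 ≤ p' i ∧ p' i ≤ p i - 1) :
    e₀ < 0 ∧
    ∀ k : ℤ,
      1 + |e₀| * (k * ∏ j, p j)
        - ∑ i, ⌈(((k * ∏ j, p j) * p' i : ℤ) : ℚ) / ((p i : ℤ) : ℚ)⌉ = k + 1 := by
  have hp : ∀ i, 0 < p i := fun i => by linarith [hp2 i]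
  have hP : 0 < ∏ j, p j := prod_pos fun i _ => hp i
  have hS : 0 ≤ ∑ i, p' i * ∏ j ∈ univ.erase i, p j :=
    sum_nonneg fun i _ => mul_nonneg (by linarith [(hp' i).1]) (prod_nonneg fun j _ => (hp j).le)
  have he₀ : e₀ < 0 := neg_of_mul_neg_left (by linarith) hP.le
  refine ⟨he₀, fun k => ?_⟩
  rw [sum_congr rfl fun i _ => Int.ceil_prod_mul_div_eq p (hp i).ne' k (p' i), abs_of_neg he₀]
  simp_rw [mul_assoc k, ← mul_sum]
  linear_combination (-k) * heq

/-- Let `l ≥ 1` and let `p₁, …, p_l` be pairwise coprime integers with each `p_i ≥ 2`,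
and let integers `(e₀, p₁', …, p_l')` satisfy the Diophantine equation
`e₀·p₁⋯p_l + ∑_i p_i'·∏_{j≠i} p_j = −1` with `1 ≤ p_i' ≤ p_i − 1`. Then `e₀ < 0`, and
for every integer `k`, `Δ(k·p₁⋯p_l) = k + 1`, where
`Δ(n) = 1 + |e₀|·n − ∑_{i=1}^{l} ⌈n·p_i'/p_i⌉`. -/
theorem stmt6 (l : ℕ) (hl : 1 ≤ l) (p : Fin l → ℤ)
    (hp2 : ∀ i, 2 ≤ p i)
    (hcop : ∀ i j : Fin l, i ≠ j → Int.gcd (p i) (p j) = 1)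
    (e₀ : ℤ) (p' : Fin l → ℤ)
    (heq : e₀ * ∏ j, p j + ∑ i, p' i * ∏ j ∈ Finset.univ.erase i, p j = -1)
    (hp' : ∀ i, 1 ≤ p' i ∧ p' i ≤ p i - 1) :
    e₀ < 0 ∧
    ∀ k : ℤ,
      1 + |e₀| * (k * ∏ j, p j)
        - ∑ i, ⌈(((k * ∏ j, p j) * p' i : ℤ) : ℚ) / ((p i : ℤ) : ℚ)⌉ = k + 1 :=
  stmt6_general l p hp2 e₀ p' heq hp'
end

section
/- Let (e₀, a, b, p', q') be a normalized Diophantine solution for Σ(2,3,5,p,q), with associated delta function Δ. Then for all integers x and k, the following identity of rational numbers holds: Δ(xpq + k) = 1 + k·|e₀| + (xpq/2 − ⌈(xpq+k)/2⌉) + (axpq/3 − ⌈a(xpq+k)/3⌉) + (bxpq/5 − ⌈b(xpq+k)/5⌉) − ⌈kp'/p⌉ − ⌈kq'/q⌉ + x/30. -/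
/-- The delta function associated to a normalized Diophantine solution `(e₀, a, b, p', q')`
for `Σ(2,3,5,p,q)`:
`Δ(n) = 1 + |e₀|·n − ⌈n/2⌉ − ⌈an/3⌉ − ⌈bn/5⌉ − ⌈np'/p⌉ − ⌈nq'/q⌉`. -/
def delta235 (p q e₀ a b p' q' : ℤ) (n : ℤ) : ℤ :=
  1 + |e₀| * n - ⌈(n : ℚ) / 2⌉ - ⌈((a * n : ℤ) : ℚ) / 3⌉ - ⌈((b * n : ℤ) : ℚ) / 5⌉
    - ⌈((n * p' : ℤ) : ℚ) / (p : ℚ)⌉ - ⌈((n * q' : ℤ) : ℚ) / (q : ℚ)⌉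

/-- For a normalized Diophantine solution `(e₀, a, b, p', q')` for `Σ(2,3,5,p,q)`,
for all integers `x` and `k`,
`Δ(xpq + k) = 1 + k·|e₀| + (xpq/2 − ⌈(xpq+k)/2⌉) + (axpq/3 − ⌈a(xpq+k)/3⌉)
  + (bxpq/5 − ⌈b(xpq+k)/5⌉) − ⌈kp'/p⌉ − ⌈kq'/q⌉ + x/30` as rational numbers. -/
theorem stmt9 (p q e₀ a b p' q' : ℤ)
    (hp : 7 ≤ p) (hpq : p < q)
    (hgcd : Int.gcd p q = 1) (hp30 : Int.gcd p 30 = 1) (hq30 : Int.gcd q 30 = 1)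
    (ha : a = 1 ∨ a = 2) (hb : 1 ≤ b ∧ b ≤ 4)
    (hp' : 1 ≤ p' ∧ p' ≤ p - 1) (hq' : 1 ≤ q' ∧ q' ≤ q - 1)
    (heq : 30*p*q*e₀ + 15*p*q + 10*a*p*q + 6*b*p*q + 30*p'*q + 30*p*q' = -1) :
    ∀ x k : ℤ,
      ((delta235 p q e₀ a b p' q' (x*p*q + k) : ℤ) : ℚ) =
        1 + (k : ℚ) * ((|e₀| : ℤ) : ℚ)
        + (((x*p*q : ℤ) : ℚ) / 2 - (⌈((x*p*q + k : ℤ) : ℚ) / 2⌉ : ℚ))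
        + (((a*x*p*q : ℤ) : ℚ) / 3 - (⌈((a*(x*p*q + k) : ℤ) : ℚ) / 3⌉ : ℚ))
        + (((b*x*p*q : ℤ) : ℚ) / 5 - (⌈((b*(x*p*q + k) : ℤ) : ℚ) / 5⌉ : ℚ))
        - (⌈((k*p' : ℤ) : ℚ) / (p : ℚ)⌉ : ℚ) - (⌈((k*q' : ℤ) : ℚ) / (q : ℚ)⌉ : ℚ)
        + (x : ℚ) / 30 := by
  intro x k
  have hq7 : (7:ℤ) < q := lt_of_le_of_lt hp hpq
  have ha1 : 1 ≤ a := by rcases ha with h | h <;> omega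
  have he0 : e₀ < 0 := by
    by_contra h
    push_neg at h
    have hp0' : (0:ℤ) < p := by omega
    have hq0' : (0:ℤ) < q := by omega
    have hpq0 : (0:ℤ) < p*q := mul_pos hp0' hq0'
    nlinarith [mul_nonneg h hpq0.le, mul_le_mul_of_nonneg_right ha1 hpq0.le,
      mul_le_mul_of_nonneg_right hb.1 hpq0.le, mul_le_mul_of_nonneg_right hp'.1 hq0'.le,
      mul_le_mul_of_nonneg_left hq'.1 hp0'.le]
  have habs : |e₀| = -e₀ := abs_of_neg he0
  have hp0 : (p:ℚ) ≠ 0 := by positivity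
  have hq0 : (q:ℚ) ≠ 0 := by
    have : (0:ℤ) < q := by omega
    positivity
  have hcp : ⌈(((x*p*q + k) * p' : ℤ) : ℚ) / (p:ℚ)⌉ = ⌈((k*p':ℤ):ℚ)/(p:ℚ)⌉ + x*q*p' := by
    rw [show (((x*p*q + k) * p' : ℤ) : ℚ) / (p:ℚ)
        = ((k*p':ℤ):ℚ)/(p:ℚ) + ((x*q*p' : ℤ):ℚ) by push_cast; field_simp; ring]
    rw [Int.ceil_add_intCast]
  have hcq : ⌈(((x*p*q + k) * q' : ℤ) : ℚ) / (q:ℚ)⌉ = ⌈((k*q':ℤ):ℚ)/(q:ℚ)⌉ + x*p*q' := by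
    rw [show (((x*p*q + k) * q' : ℤ) : ℚ) / (q:ℚ)
        = ((k*q':ℤ):ℚ)/(q:ℚ) + ((x*p*q' : ℤ):ℚ) by push_cast; field_simp; ring]
    rw [Int.ceil_add_intCast]
  have heqQ : (30*p*q*e₀ + 15*p*q + 10*a*p*q + 6*b*p*q + 30*p'*q + 30*p*q' : ℚ) = -1 := by
    exact_mod_cast congrArg (Int.cast : ℤ → ℚ) heq
  unfold delta235
  rw [habs, hcp, hcq]
  push_cast
  linear_combination (-(x:ℚ)/30) * heqQ
end

section
/- Let (e₀, a, b, p', q') be a normalized Diophantine solution for Σ(2,3,5,p,q), with associated delta function Δ. Then Δ(25pq) = 1, Δ(26pq) = 1, and Δ(27pq) = 1. -/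
lemma ceil0 (d m : ℤ) (hd : 0 < d) : ⌈((d * m : ℤ) : ℚ) / (d : ℚ)⌉ = m := by
  have hd' : (d : ℚ) ≠ 0 := Int.cast_ne_zero.mpr hd.ne'
  rw [Int.cast_mul, mul_div_cancel_left₀ _ hd', Int.ceil_intCast]

lemma ceil1 (d m r : ℤ) (hd : 0 < d) (h0 : 0 < r) (h1 : r ≤ d) :
    ⌈((d * m + r : ℤ) : ℚ) / (d : ℚ)⌉ = m + 1 := by
  have hd' : (d : ℚ) ≠ 0 := Int.cast_ne_zero.mpr hd.ne'
  have hdq : (0 : ℚ) < (d : ℚ) := by exact_mod_cast hd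
  have h : ((d * m + r : ℤ) : ℚ) / (d : ℚ) = (r : ℚ) / (d : ℚ) + (m : ℤ) := by
    push_cast; field_simp; ring
  rw [h, Int.ceil_add_intCast]
  have h1' : ⌈(r : ℚ) / (d : ℚ)⌉ = 1 := by
    rw [Int.ceil_eq_iff]
    constructor
    · have : (0 : ℚ) < (r : ℚ) / (d : ℚ) := div_pos (by exact_mod_cast h0) hdq
      push_cast
      linarith
    · push_cast
      rw [div_le_one hdq]
      exact_mod_cast h1
  rw [h1', add_comm]

/-- For a normalized Diophantine solution `(e₀, a, b, p', q')` for `Σ(2,3,5,p,q)`,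
`Δ(25pq) = 1`, `Δ(26pq) = 1` and `Δ(27pq) = 1`. -/
theorem stmt10 (p q e₀ a b p' q' : ℤ)
    (hp : 7 ≤ p) (hpq : p < q)
    (hgcd : Int.gcd p q = 1) (hp30 : Int.gcd p 30 = 1) (hq30 : Int.gcd q 30 = 1)
    (ha : a = 1 ∨ a = 2) (hb : 1 ≤ b ∧ b ≤ 4)
    (hp' : 1 ≤ p' ∧ p' ≤ p - 1) (hq' : 1 ≤ q' ∧ q' ≤ q - 1)
    (heq : 30*p*q*e₀ + 15*p*q + 10*a*p*q + 6*b*p*q + 30*p'*q + 30*p*q' = -1) :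
    delta235 p q e₀ a b p' q' (25*p*q) = 1 ∧
    delta235 p q e₀ a b p' q' (26*p*q) = 1 ∧
    delta235 p q e₀ a b p' q' (27*p*q) = 1 := by
  obtain ⟨hp'1, hp'2⟩ := hp'
  obtain ⟨hq'1, hq'2⟩ := hq'
  obtain ⟨hb1, hb2⟩ := hb
  have hp0 : (0:ℤ) < p := by omega
  have hq0 : (0:ℤ) < q := by omega
  have ha1 : 1 ≤ a := by omega
  have key : 30*(p*q*e₀) + 15*(p*q) + 10*(a*(p*q)) + 6*(b*(p*q)) + 30*(q*p') + 30*(p*q')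
      = -1 := by linear_combination heq
  have hPQ : 0 < p*q := mul_pos hp0 hq0
  have hAQ : 0 < a*(p*q) := mul_pos (by omega) hPQ
  have hBQ : 0 < b*(p*q) := mul_pos (by omega) hPQ
  have hC : 0 < q*p' := mul_pos hq0 (by omega)
  have hD : 0 < p*q' := mul_pos hp0 (by omega)
  have hEneg : p*q*e₀ < 0 := by linarith
  have he0 : e₀ < 0 := by
    rcases lt_or_ge e₀ 0 with h | h
    · exact h
    · exfalso; nlinarith [mul_nonneg hPQ.le h]
  have habs : |e₀| = -e₀ := abs_of_neg he0
  -- congruence data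
  obtain ⟨k2, hk2⟩ : ∃ k, p*q = 2*k + 1 := by
    refine ⟨(p*q - 1)/2, ?_⟩
    have : (2:ℤ) ∣ (p*q - 1) := by omega
    omega
  obtain ⟨k3, hk3⟩ : ∃ k, a*(p*q) = 3*k + 2 := by
    refine ⟨(a*(p*q) - 2)/3, ?_⟩
    omega
  obtain ⟨k5, hk5⟩ : ∃ k, b*(p*q) = 5*k + 4 := by
    refine ⟨(b*(p*q) - 4)/5, ?_⟩
    omega
  refine ⟨?_, ?_, ?_⟩
  · show (1 + |e₀| * (25*p*q) - ⌈((25*p*q : ℤ) : ℚ) / 2⌉ - ⌈((a * (25*p*q) : ℤ) : ℚ) / 3⌉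
      - ⌈((b * (25*p*q) : ℤ) : ℚ) / 5⌉ - ⌈((25*p*q * p' : ℤ) : ℚ) / (p : ℚ)⌉
      - ⌈((25*p*q * q' : ℤ) : ℚ) / (q : ℚ)⌉ : ℤ) = 1
    have c1 : ⌈((25*p*q : ℤ) : ℚ) / 2⌉ = (25*k2+12) + 1 := by
      rw [show ((25*p*q : ℤ)) = 2*(25*k2+12) + 1 from by linarith,
        show ((2:ℚ)) = ((2:ℤ):ℚ) from by norm_num]
      exact ceil1 2 (25*k2+12) 1 (by norm_num) (by norm_num) (by norm_num)
    have c2 : ⌈((a * (25*p*q) : ℤ) : ℚ) / 3⌉ = (25*k3+16) + 1 := by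
      rw [show ((a * (25*p*q) : ℤ)) = 3*(25*k3+16) + 2 from by linear_combination 25*hk3,
        show ((3:ℚ)) = ((3:ℤ):ℚ) from by norm_num]
      exact ceil1 3 (25*k3+16) 2 (by norm_num) (by norm_num) (by norm_num)
    have c3 : ⌈((b * (25*p*q) : ℤ) : ℚ) / 5⌉ = 25*k5+20 := by
      rw [show ((b * (25*p*q) : ℤ)) = 5*(25*k5+20) from by linear_combination 25*hk5,
        show ((5:ℚ)) = ((5:ℤ):ℚ) from by norm_num]
      exact ceil0 5 (25*k5+20) (by norm_num)
    have c4 : ⌈((25*p*q * p' : ℤ) : ℚ) / (p : ℚ)⌉ = 25*(q*p') := by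
      rw [show ((25*p*q * p' : ℤ)) = p*(25*(q*p')) from by ring]
      exact ceil0 p _ hp0
    have c5 : ⌈((25*p*q * q' : ℤ) : ℚ) / (q : ℚ)⌉ = 25*(p*q') := by
      rw [show ((25*p*q * q' : ℤ)) = q*(25*(p*q')) from by ring]
      exact ceil0 q _ hq0
    rw [habs, c1, c2, c3, c4, c5]
    have : p*q*e₀ = -(k2+k3+k5+(q*p')+(p*q')+2) := by omega
    linear_combination -25 * this
  · show (1 + |e₀| * (26*p*q) - ⌈((26*p*q : ℤ) : ℚ) / 2⌉ - ⌈((a * (26*p*q) : ℤ) : ℚ) / 3⌉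
      - ⌈((b * (26*p*q) : ℤ) : ℚ) / 5⌉ - ⌈((26*p*q * p' : ℤ) : ℚ) / (p : ℚ)⌉
      - ⌈((26*p*q * q' : ℤ) : ℚ) / (q : ℚ)⌉ : ℤ) = 1
    have c1 : ⌈((26*p*q : ℤ) : ℚ) / 2⌉ = 26*k2+13 := by
      rw [show ((26*p*q : ℤ)) = 2*(26*k2+13) from by linarith,
        show ((2:ℚ)) = ((2:ℤ):ℚ) from by norm_num]
      exact ceil0 2 (26*k2+13) (by norm_num)
    have c2 : ⌈((a * (26*p*q) : ℤ) : ℚ) / 3⌉ = (26*k3+17) + 1 := by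
      rw [show ((a * (26*p*q) : ℤ)) = 3*(26*k3+17) + 1 from by linear_combination 26*hk3,
        show ((3:ℚ)) = ((3:ℤ):ℚ) from by norm_num]
      exact ceil1 3 (26*k3+17) 1 (by norm_num) (by norm_num) (by norm_num)
    have c3 : ⌈((b * (26*p*q) : ℤ) : ℚ) / 5⌉ = (26*k5+20) + 1 := by
      rw [show ((b * (26*p*q) : ℤ)) = 5*(26*k5+20) + 4 from by linear_combination 26*hk5,
        show ((5:ℚ)) = ((5:ℤ):ℚ) from by norm_num]
      exact ceil1 5 (26*k5+20) 4 (by norm_num) (by norm_num) (by norm_num)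
    have c4 : ⌈((26*p*q * p' : ℤ) : ℚ) / (p : ℚ)⌉ = 26*(q*p') := by
      rw [show ((26*p*q * p' : ℤ)) = p*(26*(q*p')) from by ring]
      exact ceil0 p _ hp0
    have c5 : ⌈((26*p*q * q' : ℤ) : ℚ) / (q : ℚ)⌉ = 26*(p*q') := by
      rw [show ((26*p*q * q' : ℤ)) = q*(26*(p*q')) from by ring]
      exact ceil0 q _ hq0
    rw [habs, c1, c2, c3, c4, c5]
    have : p*q*e₀ = -(k2+k3+k5+(q*p')+(p*q')+2) := by omega
    linear_combination -26 * this
  · show (1 + |e₀| * (27*p*q) - ⌈((27*p*q : ℤ) : ℚ) / 2⌉ - ⌈((a * (27*p*q) : ℤ) : ℚ) / 3⌉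
      - ⌈((b * (27*p*q) : ℤ) : ℚ) / 5⌉ - ⌈((27*p*q * p' : ℤ) : ℚ) / (p : ℚ)⌉
      - ⌈((27*p*q * q' : ℤ) : ℚ) / (q : ℚ)⌉ : ℤ) = 1
    have c1 : ⌈((27*p*q : ℤ) : ℚ) / 2⌉ = (27*k2+13) + 1 := by
      rw [show ((27*p*q : ℤ)) = 2*(27*k2+13) + 1 from by linarith,
        show ((2:ℚ)) = ((2:ℤ):ℚ) from by norm_num]
      exact ceil1 2 (27*k2+13) 1 (by norm_num) (by norm_num) (by norm_num)
    have c2 : ⌈((a * (27*p*q) : ℤ) : ℚ) / 3⌉ = 27*k3+18 := by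
      rw [show ((a * (27*p*q) : ℤ)) = 3*(27*k3+18) from by linear_combination 27*hk3,
        show ((3:ℚ)) = ((3:ℤ):ℚ) from by norm_num]
      exact ceil0 3 (27*k3+18) (by norm_num)
    have c3 : ⌈((b * (27*p*q) : ℤ) : ℚ) / 5⌉ = (27*k5+21) + 1 := by
      rw [show ((b * (27*p*q) : ℤ)) = 5*(27*k5+21) + 3 from by linear_combination 27*hk5,
        show ((5:ℚ)) = ((5:ℤ):ℚ) from by norm_num]
      exact ceil1 5 (27*k5+21) 3 (by norm_num) (by norm_num) (by norm_num)
    have c4 : ⌈((27*p*q * p' : ℤ) : ℚ) / (p : ℚ)⌉ = 27*(q*p') := by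
      rw [show ((27*p*q * p' : ℤ)) = p*(27*(q*p')) from by ring]
      exact ceil0 p _ hp0
    have c5 : ⌈((27*p*q * q' : ℤ) : ℚ) / (q : ℚ)⌉ = 27*(p*q') := by
      rw [show ((27*p*q * q' : ℤ)) = q*(27*(p*q')) from by ring]
      exact ceil0 q _ hq0
    rw [habs, c1, c2, c3, c4, c5]
    have : p*q*e₀ = -(k2+k3+k5+(q*p')+(p*q')+2) := by omega
    linear_combination -27 * this
end

section
/- Let (e₀, a, b, p', q') be a normalized Diophantine solution for Σ(2,3,5,p,q) with e₀ = −3, a = 2 and b = 4 (the case pq ≡ 1 (mod 30)), and let Δ be the associated delta function. Then Δ(15pq + 30pq') = 1 and Δ(15pq + 30pq' + 1) = 1. -/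
private lemma ceil_eq_of (a b k r : ℤ) (hb : 0 < b) (h : a = b * k - r)
    (h0 : 0 ≤ r) (hr : r < b) : ⌈(a : ℚ) / (b : ℚ)⌉ = k := by
  have hb' : (0:ℚ) < (b:ℚ) := by exact_mod_cast hb
  rw [Int.ceil_eq_iff]
  constructor
  · rw [lt_div_iff₀ hb']
    have h1 : (k - 1) * b < a := by nlinarith
    push_cast
    exact_mod_cast h1
  · rw [div_le_iff₀ hb']
    have h2 : a ≤ k * b := by nlinarith
    exact_mod_cast h2

/-- For a normalized Diophantine solution `(e₀, a, b, p', q')` for `Σ(2,3,5,p,q)` with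
`e₀ = −3`, `a = 2`, `b = 4` (the case `pq ≡ 1 (mod 30)`), one has
`Δ(15pq + 30pq') = 1` and `Δ(15pq + 30pq' + 1) = 1`. -/
theorem stmt11 (p q e₀ a b p' q' : ℤ)
    (hp : 7 ≤ p) (hpq : p < q)
    (hgcd : Int.gcd p q = 1) (hp30 : Int.gcd p 30 = 1) (hq30 : Int.gcd q 30 = 1)
    (ha : a = 1 ∨ a = 2) (hb : 1 ≤ b ∧ b ≤ 4)
    (hp' : 1 ≤ p' ∧ p' ≤ p - 1) (hq' : 1 ≤ q' ∧ q' ≤ q - 1)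
    (heq : 30*p*q*e₀ + 15*p*q + 10*a*p*q + 6*b*p*q + 30*p'*q + 30*p*q' = -1)
    (he₀ : e₀ = -3) (ha2 : a = 2) (hb4 : b = 4) :
    delta235 p q e₀ a b p' q' (15*p*q + 30*p*q') = 1 ∧
    delta235 p q e₀ a b p' q' (15*p*q + 30*p*q' + 1) = 1 := by
  subst he₀ ha2 hb4
  have hp0 : (0:ℤ) < p := by linarith
  have hq0 : (0:ℤ) < q := by linarith
  have E : 30*(p'*q) + 30*(p*q') = 31*(p*q) - 1 := by linear_combination heq
  obtain ⟨w, hw⟩ : ∃ w, p*q = 30*w + 1 := by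
    have E' := E
    generalize p'*q = t at E'
    generalize p*q' = s at E'
    generalize p*q = m at E' ⊢
    exact ⟨(m-1)/30, by omega⟩
  have hst : p'*q + p*q' = 31*w + 1 := by
    have E' := E
    have hw' := hw
    generalize p'*q = t at E' ⊢
    generalize p*q' = s at E' ⊢
    generalize p*q = m at E' hw'
    omega
  set n : ℤ := 15*p*q + 30*p*q' with hn
  have c2 : ⌈(n : ℚ) / 2⌉ = 23*(p*q) - 15*(p'*q) := by
    have := ceil_eq_of n 2 (23*(p*q) - 15*(p'*q)) 1 (by norm_num)
      (by linear_combination E) (by norm_num) (by norm_num)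
    exact_mod_cast this
  have c3 : ⌈((2 * n : ℤ) : ℚ) / 3⌉ = 10*(p*q) + 20*(p*q') := by
    have := ceil_eq_of (2*n) 3 (10*(p*q) + 20*(p*q')) 0 (by norm_num)
      (by ring) (by norm_num) (by norm_num)
    exact_mod_cast this
  have c5 : ⌈((4 * n : ℤ) : ℚ) / 5⌉ = 12*(p*q) + 24*(p*q') := by
    have := ceil_eq_of (4*n) 5 (12*(p*q) + 24*(p*q')) 0 (by norm_num)
      (by ring) (by norm_num) (by norm_num)
    exact_mod_cast this
  have cp : ⌈((n * p' : ℤ) : ℚ) / (p : ℚ)⌉ = 15*(p'*q) + 30*(p'*q') := by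
    exact ceil_eq_of (n*p') p (15*(p'*q) + 30*(p'*q')) 0 hp0 (by ring)
      (by norm_num) hp0
  have cq : ⌈((n * q' : ℤ) : ℚ) / (q : ℚ)⌉ = 46*(p*q') - 30*(p'*q') := by
    exact ceil_eq_of (n*q') q (46*(p*q') - 30*(p'*q')) q' hq0
      (by linear_combination q' * E) (by linarith [hq'.1]) (by linarith [hq'.2])
  have d2 : ⌈((n + 1 : ℤ) : ℚ) / 2⌉ = 23*(p*q) - 15*(p'*q) := by
    have := ceil_eq_of (n+1) 2 (23*(p*q) - 15*(p'*q)) 0 (by norm_num)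
      (by linear_combination E) (by norm_num) (by norm_num)
    exact_mod_cast this
  have d3 : ⌈((2 * (n + 1) : ℤ) : ℚ) / 3⌉ = 920*w + 31 - 20*(p'*q) := by
    have := ceil_eq_of (2*(n+1)) 3 (920*w + 31 - 20*(p'*q)) 1 (by norm_num)
      (by linear_combination 2*E + 92*hw) (by norm_num) (by norm_num)
    exact_mod_cast this
  have d5 : ⌈((4 * (n + 1) : ℤ) : ℚ) / 5⌉ = 1104*w + 37 - 24*(p'*q) := by
    have := ceil_eq_of (4*(n+1)) 5 (1104*w + 37 - 24*(p'*q)) 1 (by norm_num)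
      (by linear_combination 4*E + 184*hw) (by norm_num) (by norm_num)
    exact_mod_cast this
  have dp : ⌈(((n + 1) * p' : ℤ) : ℚ) / (p : ℚ)⌉ = 15*(p'*q) + 30*(p'*q') + 1 := by
    exact ceil_eq_of ((n+1)*p') p (15*(p'*q) + 30*(p'*q') + 1) (p - p') hp0
      (by ring) (by linarith [hp'.2]) (by linarith [hp'.1])
  have dq : ⌈(((n + 1) * q' : ℤ) : ℚ) / (q : ℚ)⌉ = 46*(p*q') - 30*(p'*q') := by
    exact ceil_eq_of ((n+1)*q') q (46*(p*q') - 30*(p'*q')) 0 hq0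
      (by linear_combination q' * E) (by norm_num) hq0
  constructor
  · show 1 + |(-3:ℤ)| * n - ⌈(n : ℚ) / 2⌉ - ⌈((2 * n : ℤ) : ℚ) / 3⌉ - ⌈((4 * n : ℤ) : ℚ) / 5⌉
      - ⌈((n * p' : ℤ) : ℚ) / (p : ℚ)⌉ - ⌈((n * q' : ℤ) : ℚ) / (q : ℚ)⌉ = 1
    rw [c2, c3, c5, cp, cq]
    simp only [hn]
    norm_num
    ring
  · show 1 + |(-3:ℤ)| * (n+1) - ⌈((n+1 : ℤ) : ℚ) / 2⌉ - ⌈((2 * (n+1) : ℤ) : ℚ) / 3⌉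
      - ⌈((4 * (n+1) : ℤ) : ℚ) / 5⌉ - ⌈(((n+1) * p' : ℤ) : ℚ) / (p : ℚ)⌉
      - ⌈(((n+1) * q' : ℤ) : ℚ) / (q : ℚ)⌉ = 1
    rw [d2, d3, d5, dp, dq]
    simp only [hn]
    norm_num
    linear_combination 44*hst + 22*hw
end

section
/- Let (e₀, a, b, p', q') be a normalized Diophantine solution for Σ(2,3,7,p,q), with associated delta function Δ. Then Δ(26pq) = 1, Δ(35pq) = 1, Δ(36pq) = 1, and Δ(39pq) = 1. -/
/-!
Reading the Diophantine equation modulo 2, 3 and 7 shows that `pq`, `apq` and `bpq` are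
congruent to 1 modulo 2, 3 and 7 respectively, and since `a`, `b`, `p'`, `q'` are positive the
equation forces `e₀ < 0`. Substituting into `Δ(kpq)`, everything cancels except
`1 + k - ⌈k/2⌉ - ⌈k/3⌉ - ⌈k/7⌉`, which is 1 exactly when `⌈k/2⌉ + ⌈k/3⌉ + ⌈k/7⌉ = k`,
as happens for `k = 26, 35, 36, 39`.
-/

/-- The delta function associated to a normalized Diophantine solution `(e₀, a, b, p', q')`
for `Σ(2,3,7,p,q)`:
`Δ(n) = 1 + |e₀|·n − ⌈n/2⌉ − ⌈an/3⌉ − ⌈bn/7⌉ − ⌈np'/p⌉ − ⌈nq'/q⌉`. -/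
def delta237 (p q e₀ a b p' q' : ℤ) (n : ℤ) : ℤ :=
  1 + |e₀| * n - ⌈(n : ℚ) / 2⌉ - ⌈((a * n : ℤ) : ℚ) / 3⌉ - ⌈((b * n : ℤ) : ℚ) / 7⌉
    - ⌈((n * p' : ℤ) : ℚ) / (p : ℚ)⌉ - ⌈((n * q' : ℤ) : ℚ) / (q : ℚ)⌉

section Ceil

variable {K : Type*} [Field K] [LinearOrder K] [IsStrictOrderedRing K] [FloorRing K]

theorem Int.ceil_intCast_mul_div_cancel_left {d : ℤ} (hd : d ≠ 0) (m : ℤ) :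
    ⌈((d * m : ℤ) : K) / d⌉ = m := by
  rw [Int.cast_mul, mul_div_cancel_left₀ _ (Int.cast_ne_zero.mpr hd), Int.ceil_intCast]

theorem Int.ceil_intCast_mul_div_of_dvd_sub_one {d x : ℤ} (hd : d ≠ 0) (hx : d ∣ x - 1) (k : ℤ) :
    ⌈((x * k : ℤ) : K) / d⌉ = (x - 1) / d * k + ⌈(k : K) / d⌉ := by
  obtain ⟨m, hm⟩ := hx
  obtain rfl : x = d * m + 1 := by linarith
  have hd' : (d : K) ≠ 0 := Int.cast_ne_zero.mpr hd
  rw [add_sub_cancel_right, Int.mul_ediv_cancel_left _ hd, ← Int.ceil_intCast_add]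
  congr 1
  push_cast
  field_simp

end Ceil

theorem delta237_mul_mul {p q e₀ a b p' q' : ℤ} (hp : p ≠ 0) (hq : q ≠ 0) (he₀ : e₀ ≤ 0)
    (heq : 42*p*q*e₀ + 21*p*q + 14*a*p*q + 6*b*p*q + 42*p'*q + 42*p*q' = -1) (k : ℤ) :
    delta237 p q e₀ a b p' q' (k*p*q) = 1 + k - ⌈(k : ℚ) / 2⌉ - ⌈(k : ℚ) / 3⌉ - ⌈(k : ℚ) / 7⌉ := by
  -- the witnesses come from reading `heq` modulo 2, 3 and 7
  have h2 : (2 : ℤ) ∣ p*q - 1 :=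
    ⟨11*p*q + 21*p*q*e₀ + 7*a*p*q + 3*b*p*q + 21*p'*q + 21*p*q', by linear_combination -heq⟩
  have h3 : (3 : ℤ) ∣ a*p*q - 1 :=
    ⟨7*p*q + 14*p*q*e₀ + 5*a*p*q + 2*b*p*q + 14*p'*q + 14*p*q', by linear_combination -heq⟩
  have h7 : (7 : ℤ) ∣ b*p*q - 1 :=
    ⟨3*p*q + 6*p*q*e₀ + 2*a*p*q + b*p*q + 6*p'*q + 6*p*q', by linear_combination -heq⟩
  have c2 : ⌈((p*q*k : ℤ) : ℚ) / 2⌉ = (p*q - 1)/2 * k + ⌈(k : ℚ) / 2⌉ := by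
    simpa only [Int.cast_ofNat] using Int.ceil_intCast_mul_div_of_dvd_sub_one two_ne_zero h2 k
  have c3 : ⌈((a*p*q*k : ℤ) : ℚ) / 3⌉ = (a*p*q - 1)/3 * k + ⌈(k : ℚ) / 3⌉ := by
    simpa only [Int.cast_ofNat] using Int.ceil_intCast_mul_div_of_dvd_sub_one three_ne_zero h3 k
  have c7 : ⌈((b*p*q*k : ℤ) : ℚ) / 7⌉ = (b*p*q - 1)/7 * k + ⌈(k : ℚ) / 7⌉ := by
    simpa only [Int.cast_ofNat] using Int.ceil_intCast_mul_div_of_dvd_sub_one (by norm_num) h7 k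
  unfold delta237
  rw [abs_of_nonpos he₀, show k*p*q = p*q*k by ring, c2,
    show a*(p*q*k) = a*p*q*k by ring, c3, show b*(p*q*k) = b*p*q*k by ring, c7,
    show p*q*k*p' = p*(q*k*p') by ring, Int.ceil_intCast_mul_div_cancel_left hp,
    show p*q*k*q' = q*(p*k*q') by ring, Int.ceil_intCast_mul_div_cancel_left hq]
  have hu := Int.ediv_mul_cancel h2
  have hv := Int.ediv_mul_cancel h3
  have hw := Int.ediv_mul_cancel h7
  have hsum : -e₀*p*q - (p*q - 1)/2 - (a*p*q - 1)/3 - (b*p*q - 1)/7 - q*p' - p*q' = 1 := by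
    linarith
  linear_combination k * hsum

theorem stmt15_general (p q e₀ a b p' q' : ℤ)
    (hp : 11 ≤ p) (hpq : p < q)
    (ha : a = 1 ∨ a = 2) (hb : 1 ≤ b ∧ b ≤ 6)
    (hp' : 1 ≤ p' ∧ p' ≤ p - 1) (hq' : 1 ≤ q' ∧ q' ≤ q - 1)
    (heq : 42*p*q*e₀ + 21*p*q + 14*a*p*q + 6*b*p*q + 42*p'*q + 42*p*q' = -1) :
    delta237 p q e₀ a b p' q' (26*p*q) = 1 ∧
    delta237 p q e₀ a b p' q' (35*p*q) = 1 ∧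
    delta237 p q e₀ a b p' q' (36*p*q) = 1 ∧
    delta237 p q e₀ a b p' q' (39*p*q) = 1 := by
  have hp0 : 0 < p := by omega
  have hq0 : 0 < q := by omega
  have he₀ : e₀ < 0 := by
    have hpq0 : 0 < p * q := mul_pos hp0 hq0
    have : p * q * e₀ < 0 := by
      linarith [mul_nonneg (mul_nonneg (by omega : (0:ℤ) ≤ a) hp0.le) hq0.le,
        mul_nonneg (mul_nonneg (by omega : (0:ℤ) ≤ b) hp0.le) hq0.le,
        mul_nonneg (by omega : (0:ℤ) ≤ p') hq0.le, mul_nonneg hp0.le (by omega : (0:ℤ) ≤ q')]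
    exact neg_of_mul_neg_right this hpq0.le
  simp only [delta237_mul_mul hp0.ne' hq0.ne' he₀.le heq]
  norm_num

/-- For a normalized Diophantine solution `(e₀, a, b, p', q')` for `Σ(2,3,7,p,q)`,
`Δ(26pq) = 1`, `Δ(35pq) = 1`, `Δ(36pq) = 1` and `Δ(39pq) = 1`. -/
theorem stmt15 (p q e₀ a b p' q' : ℤ)
    (hp : 11 ≤ p) (hpq : p < q)
    (hgcd : Int.gcd p q = 1) (hp42 : Int.gcd p 42 = 1) (hq42 : Int.gcd q 42 = 1)
    (ha : a = 1 ∨ a = 2) (hb : 1 ≤ b ∧ b ≤ 6)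
    (hp' : 1 ≤ p' ∧ p' ≤ p - 1) (hq' : 1 ≤ q' ∧ q' ≤ q - 1)
    (heq : 42*p*q*e₀ + 21*p*q + 14*a*p*q + 6*b*p*q + 42*p'*q + 42*p*q' = -1) :
    delta237 p q e₀ a b p' q' (26*p*q) = 1 ∧
    delta237 p q e₀ a b p' q' (35*p*q) = 1 ∧
    delta237 p q e₀ a b p' q' (36*p*q) = 1 ∧
    delta237 p q e₀ a b p' q' (39*p*q) = 1 :=
  stmt15_general p q e₀ a b p' q' hp hpq ha hb hp' hq' heq
end

section
/- Let (e₀, a, b, c, p') be a normalized Diophantine solution for Σ(2,3,11,13,p), with associated delta function Δ. Then Δ(781p) = 1; moreover, since p ≥ 6, one has 2·(781p + 1) ≤ 1715p − 858. -/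
/-- The delta function associated to a normalized Diophantine solution `(e₀, a, b, c, p')`
for `Σ(2,3,11,13,p)`:
`Δ(n) = 1 + |e₀|·n − ⌈n/2⌉ − ⌈an/3⌉ − ⌈bn/11⌉ − ⌈cn/13⌉ − ⌈np'/p⌉`. -/
def delta231113 (p e₀ a b c p' : ℤ) (n : ℤ) : ℤ :=
  1 + |e₀| * n - ⌈(n : ℚ) / 2⌉ - ⌈((a * n : ℤ) : ℚ) / 3⌉ - ⌈((b * n : ℤ) : ℚ) / 11⌉
    - ⌈((c * n : ℤ) : ℚ) / 13⌉ - ⌈((n * p' : ℤ) : ℚ) / (p : ℚ)⌉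

lemma ceil_div_eq_of (x m q : ℤ) (hm : 0 < m) (h1 : m * q - m < x) (h2 : x ≤ m * q) :
    ⌈(x : ℚ) / (m : ℚ)⌉ = q := by
  have hm' : (0 : ℚ) < (m : ℚ) := by exact_mod_cast hm
  rw [Int.ceil_eq_iff]
  constructor
  · rw [lt_div_iff₀ hm']
    have : ((m * q - m : ℤ) : ℚ) < (x : ℚ) := by exact_mod_cast h1
    push_cast at this ⊢
    linarith
  · rw [div_le_iff₀ hm']
    have : (x : ℚ) ≤ ((m * q : ℤ) : ℚ) := by exact_mod_cast h2
    push_cast at this ⊢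
    linarith

set_option maxHeartbeats 1000000 in
/-- For a normalized Diophantine solution `(e₀, a, b, c, p')` for `Σ(2,3,11,13,p)`,
`Δ(781p) = 1`; moreover `2·(781p + 1) ≤ 1715p − 858` (since `p ≥ 6`). -/
theorem stmt18 (p e₀ a b c p' : ℤ)
    (hp : 13 < p) (hgcd : Int.gcd p 858 = 1)
    (ha : a = 1 ∨ a = 2) (hb : 1 ≤ b ∧ b ≤ 10) (hc : 1 ≤ c ∧ c ≤ 12)
    (hp' : 1 ≤ p' ∧ p' ≤ p - 1)
    (heq : 858*p*e₀ + 429*p + 286*a*p + 78*b*p + 66*c*p + 858*p' = -1) :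
    delta231113 p e₀ a b c p' (781 * p) = 1 ∧
    2 * (781 * p + 1) ≤ 1715 * p - 858 := by
  have hp0 : (0:ℤ) < p := by omega
  have heq' : 858*(p*e₀) + 429*p + 286*(a*p) + 78*(b*p) + 66*(c*p) + 858*p' = -1 := by
    linear_combination heq
  -- positivity facts
  have hA1 : p ≤ a*p := by rcases ha with h | h <;> subst h <;> linarith
  have hB1 : p ≤ b*p := le_mul_of_one_le_left hp0.le hb.1
  have hC1 : p ≤ c*p := le_mul_of_one_le_left hp0.le hc.1
  -- e₀ is negative
  have hEneg : p * e₀ < 0 := by nlinarith [hp'.1]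
  have he₀neg : e₀ < 0 := by
    by_contra h
    push_neg at h
    nlinarith
  have habs : |e₀| = -e₀ := abs_of_neg he₀neg
  -- congruence facts via omega (treating products as atoms)
  have h2 : p % 2 = 1 := by omega
  have h3 : (a*p) % 3 = 2 := by omega
  have h13 : (c*p) % 13 = 12 := by omega
  -- ceiling values
  obtain ⟨k1, hk1⟩ : ∃ k, 781*p + 1 = 2*k := ⟨(781*p+1)/2, by omega⟩
  obtain ⟨k2, hk2⟩ : ∃ k, 781*(a*p) + 1 = 3*k := ⟨(781*(a*p)+1)/3, by omega⟩
  obtain ⟨k4, hk4⟩ : ∃ k, 781*(c*p) + 1 = 13*k := ⟨(781*(c*p)+1)/13, by omega⟩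
  have c1 : ⌈((781*p : ℤ) : ℚ) / 2⌉ = k1 := by
    have : ((2:ℤ):ℚ) = (2:ℚ) := by norm_num
    rw [← this]
    exact ceil_div_eq_of _ 2 k1 (by norm_num) (by omega) (by omega)
  have c2 : ⌈((a * (781*p) : ℤ) : ℚ) / 3⌉ = k2 := by
    have hx : a * (781*p) = 781*(a*p) := by ring
    rw [hx]
    have : ((3:ℤ):ℚ) = (3:ℚ) := by norm_num
    rw [← this]
    exact ceil_div_eq_of _ 3 k2 (by norm_num) (by omega) (by omega)
  have c3 : ⌈((b * (781*p) : ℤ) : ℚ) / 11⌉ = 71*(b*p) := by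
    have hx : b * (781*p) = 781*(b*p) := by ring
    rw [hx]
    have : ((11:ℤ):ℚ) = (11:ℚ) := by norm_num
    rw [← this]
    exact ceil_div_eq_of _ 11 (71*(b*p)) (by norm_num) (by nlinarith) (by nlinarith)
  have c4 : ⌈((c * (781*p) : ℤ) : ℚ) / 13⌉ = k4 := by
    have hx : c * (781*p) = 781*(c*p) := by ring
    rw [hx]
    have : ((13:ℤ):ℚ) = (13:ℚ) := by norm_num
    rw [← this]
    exact ceil_div_eq_of _ 13 k4 (by norm_num) (by omega) (by omega)
  have c5 : ⌈(((781*p) * p' : ℤ) : ℚ) / (p : ℚ)⌉ = 781*p' := by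
    have hx : (781*p) * p' = 781*(p*p') := by ring
    rw [hx]
    refine ceil_div_eq_of _ p (781*p') hp0 (by nlinarith) (by nlinarith)
  constructor
  · rw [delta231113, c1, c2, c3, c4, c5, habs]
    have hE : (-e₀) * (781*p) = -781*(p*e₀) := by ring
    rw [hE]
    -- linear identity: 858*(goal LHS stuff) comes from heq'
    have h858 : 858*(781*(p*e₀) + k1 + k2 + 71*(b*p) + k4 + 781*p') = 0 := by
      linear_combination 781*heq' - 429*hk1 - 286*hk2 - 66*hk4
    have : 781*(p*e₀) + k1 + k2 + 71*(b*p) + k4 + 781*p' = 0 := by linarith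
    linarith
  · omega
end
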